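/- Let λ : [0,T) → (0,∞) be continuous and suppose there exist constants c₁, c₂ > 0 such that λ(t)² · ln|ln λ(t)| = c₁ (T − t) for all t ∈ [0,T), with λ(t) → 0 as t → T. Then ∫₀^T λ(t)^{−μ} dt < ∞ for every μ < 2. -/

import Mathlib

open Set MeasureTheory Filter Topology Real

/-!
Since `ln|ln λ| ≤ |ln λ| ≤ λ^{-δ}/δ` for `λ ≤ 1`, the log-log law gives
`δ c₁ (T - t) ≤ λ^{2-δ}`. Hence `λ^{-μ} ≲ (T - t)^{-μ/(2-δ)}` near `T`, and for `δ` small the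
exponent `μ/(2-δ)` is still below `1`, so the singularity at `T` is integrable.
Negative `μ` reduce to `μ = 0`, as `λ ≤ 1` near `T`.
-/

lemma integrableOn_Ioo_sub_rpow_neg {a b p : ℝ} (hp : p < 1) :
    IntegrableOn (fun t => (b - t) ^ (-p)) (Ioo a b) := by
  rcases le_or_gt b a with hba | hab
  · simp [Ioo_eq_empty_of_le hba]
  rw [← intervalIntegrable_iff_integrableOn_Ioo_of_le hab.le]
  simpa using (intervalIntegral.intervalIntegrable_rpow' (r := -p) (a := b - a) (b := b - b)
    (by linarith)).comp_sub_left b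

theorem ContinuousOn.integrableOn_Ico_of_norm_le_sub_rpow {E : Type*} [NormedAddCommGroup E]
    {f : ℝ → E} {a b C p : ℝ} (hf : ContinuousOn f (Ico a b)) (hp : p < 1)
    (hbound : ∀ᶠ t in 𝓝[<] b, ‖f t‖ ≤ C * (b - t) ^ (-p)) : IntegrableOn f (Ico a b) := by
  rcases le_or_gt b a with hba | hab
  · simp [Ico_eq_empty_of_le hba]
  obtain ⟨l, hlb, hl⟩ := mem_nhdsLT_iff_exists_Ioo_subset.mp hbound
  have hcb : max a l < b := max_lt hab hlb
  have hfar : IntegrableOn f (Icc a (max a l)) :=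
    (hf.mono (Icc_subset_Ico_right hcb)).integrableOn_Icc
  have hnear : IntegrableOn f (Ioo (max a l) b) :=
    ((integrableOn_Ioo_sub_rpow_neg hp).const_mul C).mono'
      ((hf.mono (Ioo_subset_Ico_self.trans (Ico_subset_Ico_left (le_max_left a l)))
        ).aestronglyMeasurable measurableSet_Ioo)
      (ae_restrict_of_forall_mem measurableSet_Ioo fun t ht =>
        hl ⟨(le_max_right a l).trans_lt ht.1, ht.2⟩)
  rw [← Icc_union_Ioo_eq_Ico (le_max_left a l) hcb]
  exact hfar.union hnear

lemma log_abs_log_le_rpow_neg_div {x δ : ℝ} (hx0 : 0 < x) (hx1 : x ≤ 1) (hδ : 0 < δ) :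
    log |log x| ≤ x ^ (-δ) / δ :=
  calc log |log x| ≤ |log x| := log_le_self (abs_nonneg _)
    _ = log x⁻¹ := by rw [abs_of_nonpos (log_nonpos hx0.le hx1), log_inv]
    _ ≤ x⁻¹ ^ δ / δ := log_le_rpow_div (inv_nonneg.2 hx0.le) hδ
    _ = x ^ (-δ) / δ := by rw [inv_rpow hx0.le, rpow_neg hx0.le]

lemma mul_le_rpow_of_sq_mul_log_abs_log_eq {x y δ : ℝ} (hx0 : 0 < x) (hx1 : x ≤ 1)
    (hδ : 0 < δ) (h : x ^ 2 * log |log x| = y) : δ * y ≤ x ^ (2 - δ) := by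
  have hxy : y ≤ x ^ 2 * x ^ (-δ) / δ := by
    rw [← h, mul_div_assoc]
    exact mul_le_mul_of_nonneg_left (log_abs_log_le_rpow_neg_div hx0 hx1 hδ) (sq_nonneg x)
  rwa [← rpow_two, ← rpow_add hx0, ← sub_eq_add_neg, le_div_iff₀' hδ] at hxy

lemma rpow_neg_le_of_le_rpow {x K s μ : ℝ} (hx : 0 ≤ x) (hK : 0 < K) (hs : 0 < s)
    (hμ : 0 ≤ μ) (h : K ≤ x ^ s) : x ^ (-μ) ≤ K ^ (-(μ / s)) :=
  calc x ^ (-μ) = (x ^ s) ^ (-(μ / s)) := by rw [← rpow_mul hx]; field_simp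
    _ ≤ K ^ (-(μ / s)) := rpow_le_rpow_of_nonpos hK h (neg_nonpos.2 (div_nonneg hμ hs.le))

/-- Integrability of negative powers of the scaling parameter in the log-log regime:
if `λ(t)² ln|ln λ(t)| = c₁(T - t)` and `λ(t) → 0` as `t → T`, then
`∫₀^T λ(t)^{-μ} dt < ∞` for every `μ < 2`. -/
theorem loglog_scale_integrability (T c₁ : ℝ) (hT : 0 < T) (hc₁ : 0 < c₁)
    (lam : ℝ → ℝ)
    (hpos : ∀ t ∈ Ico (0:ℝ) T, 0 < lam t)
    (hcont : ContinuousOn lam (Ico 0 T))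
    (heq : ∀ t ∈ Ico (0:ℝ) T, (lam t)^2 * Real.log |Real.log (lam t)| = c₁ * (T - t))
    (hlim : Tendsto lam (nhdsWithin T (Iio T)) (nhds 0)) :
    ∀ μ : ℝ, μ < 2 → IntegrableOn (fun t => lam t ^ (-μ)) (Ico 0 T) volume := by
  intro μ hμ
  set ν := max μ 0
  set δ := 1 - ν / 2 with hδ_def
  have hν0 : 0 ≤ ν := le_max_right μ 0
  have hν : ν < 2 := max_lt hμ two_pos
  have hδ : 0 < δ := by linarith
  have hp : ν / (2 - δ) < 1 := by rw [div_lt_one (by linarith)]; linarith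
  have hnear : ∀ᶠ t in 𝓝[<] T, t ∈ Ico 0 T ∧ lam t ≤ 1 :=
    Eventually.and (mem_of_superset (Ioo_mem_nhdsLT hT) Ioo_subset_Ico_self)
      (hlim.eventually_le_const zero_lt_one)
  refine (hcont.rpow_const fun t ht => Or.inl (hpos t ht).ne'
    ).integrableOn_Ico_of_norm_le_sub_rpow (C := (δ * c₁) ^ (-(ν / (2 - δ)))) hp ?_
  filter_upwards [hnear] with t ⟨ht, hlam1⟩
  have hlam0 := hpos t ht
  have hTt : 0 < T - t := sub_pos.2 ht.2
  rw [norm_of_nonneg (rpow_nonneg hlam0.le _)]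
  calc lam t ^ (-μ) ≤ lam t ^ (-ν) :=
        rpow_le_rpow_of_exponent_ge hlam0 hlam1 (neg_le_neg (le_max_left μ 0))
    _ ≤ (δ * (c₁ * (T - t))) ^ (-(ν / (2 - δ))) :=
        rpow_neg_le_of_le_rpow hlam0.le (by positivity) (by linarith) hν0
          (mul_le_rpow_of_sq_mul_log_abs_log_eq hlam0 hlam1 hδ (heq t ht))
    _ = (δ * c₁) ^ (-(ν / (2 - δ))) * (T - t) ^ (-(ν / (2 - δ))) := by
        rw [← mul_assoc, mul_rpow (by positivity) hTt.le]
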